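/- Fix real a with 0 < a < 1. Then lim_{N→∞} Γ(N−1, N·a) / (N−2)! = 1. Moreover, if a > 1, then lim_{N→∞} Γ(N−1, N·a) / (N−2)! = 0. -/

import Mathlib

/-! Write `n = N - 2` and `c = N a`, so that `Γ(N - 1, c) / (N - 2)!` is the mass that the
density `e^{-u} u^n / n!` puts beyond `c`. The tangent-line bound for `log` at `c` gives
`u^n ≤ c^n e^{n (u - c) / c}`; hence for `c ≤ n` (eventually the case when `a < 1`) the mass
on `(0, c]`, and for `c ≥ n + 1` (the case `a > 1`) the mass on `(c, ∞)`, is at most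
`c^{n+1} e^{-c} / n!`.
Since `N^n / n! ≤ e^N`, this is `O(N (a e^{1-a})^N)`, and `a e^{1-a} < 1` for `a ≠ 1`. -/

open MeasureTheory Real Filter

noncomputable def iGamma (N : ℕ) (a : ℝ) : ℝ := ∫ u in Set.Ioi a, Real.exp (-u) * u ^ (N - 1)

open Set Nat Topology

lemma integrableOn_exp_neg_mul_pow_Ioi (n : ℕ) :
    IntegrableOn (fun u : ℝ => exp (-u) * u ^ n) (Ioi 0) := by
  simpa [rpow_natCast] using GammaIntegral_convergent (s := n + 1) (by positivity)

lemma integral_exp_neg_mul_pow_Ioi (n : ℕ) :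
    ∫ u in Ioi (0 : ℝ), exp (-u) * u ^ n = n ! := by
  rw [← Gamma_nat_eq_factorial, Gamma_eq_integral (by positivity)]
  simp [rpow_natCast]

lemma iGamma_add_one_eq_factorial_sub {x : ℝ} (hx : 0 ≤ x) (n : ℕ) :
    iGamma (n + 1) x = (n ! : ℝ) - ∫ u in Ioc 0 x, exp (-u) * u ^ n := by
  have h := integrableOn_exp_neg_mul_pow_Ioi n
  rw [← integral_exp_neg_mul_pow_Ioi, ← Ioc_union_Ioi_eq_Ioi hx,
    setIntegral_union (Ioc_disjoint_Ioi le_rfl) measurableSet_Ioi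
      (h.mono_set Ioc_subset_Ioi_self) (h.mono_set (Ioi_subset_Ioi hx))]
  simp [iGamma]

lemma iGamma_nonneg (n : ℕ) {x : ℝ} (hx : 0 ≤ x) : 0 ≤ iGamma n x :=
  setIntegral_nonneg measurableSet_Ioi fun u hu => by
    have : 0 ≤ u := hx.trans (le_of_lt hu); positivity

lemma pow_le_pow_mul_exp {c u : ℝ} (hc : 0 < c) (hu : 0 ≤ u) (n : ℕ) :
    u ^ n ≤ c ^ n * exp (n * (u - c) / c) := by
  have h : u / c ≤ exp ((u - c) / c) :=
    calc u / c = (u - c) / c + 1 := by field_simp; ring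
      _ ≤ exp ((u - c) / c) := add_one_le_exp _
  calc u ^ n = c ^ n * (u / c) ^ n := by rw [div_pow, mul_div_cancel₀ _ (by positivity)]
    _ ≤ c ^ n * exp ((u - c) / c) ^ n := by gcongr
    _ = c ^ n * exp (n * (u - c) / c) := by rw [← exp_nat_mul, mul_div_assoc]

lemma setIntegral_Ioc_exp_neg_mul_pow_le {c : ℝ} {n : ℕ} (hc : 0 < c) (hcn : c ≤ n) :
    ∫ u in Ioc 0 c, exp (-u) * u ^ n ≤ c ^ (n + 1) * exp (-c) := by
  have hbound : ∀ u ∈ Ioc 0 c, exp (-u) * u ^ n ≤ c ^ n * exp (-c) := by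
    rintro u ⟨hu0, huc⟩
    have hexp : (n : ℝ) * (u - c) / c ≤ u - c := by
      rw [div_le_iff₀ hc]; nlinarith
    calc exp (-u) * u ^ n ≤ exp (-u) * (c ^ n * exp (u - c)) := by
          gcongr
          exact (pow_le_pow_mul_exp hc hu0.le n).trans (by gcongr)
      _ = c ^ n * exp (-c) := by rw [mul_left_comm, ← exp_add]; ring_nf
  calc ∫ u in Ioc 0 c, exp (-u) * u ^ n ≤ ∫ _ in Ioc 0 c, c ^ n * exp (-c) :=
        setIntegral_mono_on ((integrableOn_exp_neg_mul_pow_Ioi n).mono_set Ioc_subset_Ioi_self)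
          (integrableOn_const measure_Ioc_lt_top.ne) measurableSet_Ioc hbound
    _ = c ^ (n + 1) * exp (-c) := by
        rw [setIntegral_const, smul_eq_mul, volume_real_Ioc_of_le hc.le]; ring

lemma setIntegral_Ioi_exp_neg_mul_pow_le {c : ℝ} {n : ℕ} (hnc : (n : ℝ) < c) :
    ∫ u in Ioi c, exp (-u) * u ^ n ≤ c ^ (n + 1) * exp (-c) / (c - n) := by
  have hc : 0 < c := (Nat.cast_nonneg n).trans_lt hnc
  set k := (c - n) / c
  have hk : 0 < k := div_pos (sub_pos.2 hnc) hc
  have hbound : ∀ u ∈ Ioi c, exp (-u) * u ^ n ≤ c ^ n * exp (-n) * exp (-k * u) := by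
    intro u hu
    calc exp (-u) * u ^ n ≤ exp (-u) * (c ^ n * exp (n * (u - c) / c)) := by
          gcongr; exact pow_le_pow_mul_exp hc (hc.le.trans (le_of_lt hu)) n
      _ = c ^ n * exp (-n) * exp (-k * u) := by
          rw [mul_left_comm, mul_assoc, ← exp_add, ← exp_add]
          congr 2
          simp only [k]
          field_simp
          ring
  calc ∫ u in Ioi c, exp (-u) * u ^ n
      ≤ ∫ u in Ioi c, c ^ n * exp (-n) * exp (-k * u) :=
        setIntegral_mono_on ((integrableOn_exp_neg_mul_pow_Ioi n).mono_set (Ioi_subset_Ioi hc.le))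
          ((exp_neg_integrableOn_Ioi c hk).const_mul _) measurableSet_Ioi hbound
    _ = c ^ (n + 1) * exp (-c) / (c - n) := by
        rw [integral_const_mul, integral_exp_mul_Ioi (neg_neg_of_pos hk)]
        have hexp : exp (-n) * exp (-k * c) = exp (-c) := by
          rw [← exp_add]; congr 1; simp only [k]; field_simp; ring
        rw [neg_div_neg_eq, mul_assoc, ← mul_div_assoc, hexp]
        simp only [k]
        field_simp
        ring

lemma mul_exp_one_sub_lt_one {a : ℝ} (ha1 : a ≠ 1) : a * exp (1 - a) < 1 := by
  have h : a < exp (a - 1) := by linarith [add_one_lt_exp (sub_ne_zero.2 ha1)]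
  calc a * exp (1 - a) < exp (a - 1) * exp (1 - a) := by gcongr
    _ = 1 := by rw [← exp_add, sub_add_sub_cancel, sub_self, exp_zero]

lemma pow_mul_exp_neg_div_factorial_le {a : ℝ} (ha : 0 ≤ a) (m n : ℕ) :
    (m * a) ^ n * exp (-(m * a)) / n ! ≤ a ^ n * exp (1 - a) ^ m := by
  calc (m * a) ^ n * exp (-(m * a)) / n ! = (m : ℝ) ^ n / n ! * (a ^ n * exp (-(m * a))) := by
        rw [mul_pow]; ring
    _ ≤ exp m * (a ^ n * exp (-(m * a))) := by
        gcongr; exact pow_div_factorial_le_exp _ (Nat.cast_nonneg m) n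
    _ = a ^ n * exp (1 - a) ^ m := by
        rw [← exp_nat_mul, mul_left_comm, ← exp_add]; ring_nf

lemma tendsto_pow_mul_exp_neg_div_factorial {a : ℝ} (ha0 : 0 < a) (ha1 : a ≠ 1) :
    Tendsto (fun n : ℕ => ((n + 2) * a) ^ (n + 1) * exp (-((n + 2) * a)) / n !)
      atTop (𝓝 0) := by
  set r := a * exp (1 - a)
  have hr : Tendsto (fun n : ℕ => a⁻¹ * ((n + 2 : ℕ) * r ^ (n + 2))) atTop (𝓝 0) := by
    simpa using ((tendsto_self_mul_const_pow_of_lt_one (by positivity)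
      (mul_exp_one_sub_lt_one ha1)).comp (tendsto_add_atTop_nat 2)).const_mul a⁻¹
  refine squeeze_zero (fun n => by positivity) (fun n => ?_) hr
  calc ((n + 2) * a) ^ (n + 1) * exp (-((n + 2) * a)) / n !
      = (n + 2) * a * (((n + 2 : ℕ) * a) ^ n * exp (-((n + 2 : ℕ) * a)) / n !) := by
        push_cast; ring
    _ ≤ (n + 2) * a * (a ^ n * exp (1 - a) ^ (n + 2)) := by
        gcongr; exact pow_mul_exp_neg_div_factorial_le ha0.le _ _
    _ = a⁻¹ * ((n + 2 : ℕ) * r ^ (n + 2)) := by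
        simp only [r]; push_cast; field_simp; ring

lemma tendsto_iGamma_div_factorial_of_lt_one {a : ℝ} (ha0 : 0 < a) (ha1 : a < 1) :
    Tendsto (fun n : ℕ => iGamma (n + 1) ((n + 2) * a) / n !) atTop (𝓝 1) := by
  have hhead : Tendsto (fun n : ℕ => (∫ u in Ioc 0 ((n + 2) * a), exp (-u) * u ^ n) / n !)
      atTop (𝓝 0) := by
    refine squeeze_zero' (Eventually.of_forall fun n => ?_) ?_
      (tendsto_pow_mul_exp_neg_div_factorial ha0 ha1.ne)
    · exact div_nonneg (setIntegral_nonneg measurableSet_Ioc fun u hu => by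
        have := hu.1; positivity) (by positivity)
    · have hlarge := (tendsto_natCast_atTop_atTop.atTop_mul_const
        (sub_pos.2 ha1)).eventually_ge_atTop (2 * a)
      filter_upwards [hlarge] with n hn
      gcongr
      exact setIntegral_Ioc_exp_neg_mul_pow_le (by positivity) (by linarith)
  have hlim := (tendsto_const_nhds (x := (1 : ℝ))).sub hhead
  rw [sub_zero] at hlim
  refine hlim.congr fun n => ?_
  rw [iGamma_add_one_eq_factorial_sub (by positivity), sub_div, div_self (by positivity)]

lemma tendsto_iGamma_div_factorial_of_one_lt {a : ℝ} (ha1 : 1 < a) :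
    Tendsto (fun n : ℕ => iGamma (n + 1) ((n + 2) * a) / n !) atTop (𝓝 0) := by
  have ha0 : 0 < a := by linarith
  refine squeeze_zero (fun n => ?_) (fun n => ?_)
    (tendsto_pow_mul_exp_neg_div_factorial ha0 ha1.ne')
  · exact div_nonneg (iGamma_nonneg _ (by positivity)) (by positivity)
  · have hnc : (n : ℝ) + 1 ≤ (n + 2) * a := by nlinarith
    gcongr
    calc iGamma (n + 1) ((n + 2) * a) = ∫ u in Ioi ((n + 2) * a), exp (-u) * u ^ n := by
          simp [iGamma]
      _ ≤ ((n + 2) * a) ^ (n + 1) * exp (-((n + 2) * a)) / ((n + 2) * a - n) :=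
          setIntegral_Ioi_exp_neg_mul_pow_le (by linarith)
      _ ≤ ((n + 2) * a) ^ (n + 1) * exp (-((n + 2) * a)) :=
          div_le_self (by positivity) (by linarith)

theorem stmt3 (a : ℝ) :
    (0 < a → a < 1 →
      Tendsto (fun N : ℕ => iGamma (N - 1) ((N : ℝ) * a) / (Nat.factorial (N - 2)))
        atTop (nhds 1)) ∧
    (1 < a →
      Tendsto (fun N : ℕ => iGamma (N - 1) ((N : ℝ) * a) / (Nat.factorial (N - 2)))
        atTop (nhds 0)) := by
  simp only [← tendsto_add_atTop_iff_nat 2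
    (f := fun N : ℕ => iGamma (N - 1) ((N : ℝ) * a) / (N - 2)!)]
  simp only [Nat.add_sub_cancel, Nat.add_succ_sub_one, Nat.cast_add, Nat.cast_ofNat]
  exact ⟨tendsto_iGamma_div_factorial_of_lt_one, tendsto_iGamma_div_factorial_of_one_lt⟩
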